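/- Let η > 0, let U : ℝ^d → ℝ be twice continuously differentiable, let V : ℝ^d → ℝ be continuously differentiable, let Q, P : [0, η] → ℝ^d be continuously differentiable and satisfy Q'(t) = ∇V(P(t)), P'(t) = −∇U(Q(t)), Q(0) = q, P(0) = p, and let q̂ = q + η∇V(p − (η/2)∇U(q)) and p̂ = p − (η/2)(∇U(q) + ∇U(q̂)) be the one-step leapfrog update. Then p̂ − P(η) = T₁ + T₂ + T₃ + T₄, where T₁ = ∫₀^η ∫₀^t [∇²U(Q(s)) − ∇²U(q + s∇V(p))] ∇V(P(s)) ds dt; T₂ = ∫₀^η ∫₀^t ∇²U(q + s∇V(p)) (∇V(P(s)) − ∇V(p)) ds dt; T₃ = ∫₀^η ∫₀^t ∇²U(q + s∇V(p)) ∇V(p) ds dt − (η/2) ∫₀^η ∇²U(q + s∇V(p)) ∇V(p) ds; and T₄ = (η²/2) ∫₀¹ ∇²U( (1−s)q̂ + s(q + η∇V(p)) ) ( ∇V(p) − ∇V(p − (η/2)∇U(q)) ) ds. -/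

import Mathlib

/-!
Integrating the flow twice gives `P η = p - η • ∇U q - ∫₀^η ∫₀^t ∇²U (Q s) (∇V (P s))`, and the
integrands of the three double integrals in `T₁ + T₂ + T₃` telescope to `∇²U (Q s) (∇V (P s))`.
The fundamental theorem of calculus for `∇U` along the segment from `q` to `q + η • ∇V p`
evaluates the single integral in `T₃`, and along the segment from `q̂` to `q + η • ∇V p` it
evaluates `T₄` to `(η / 2) • (∇U (q + η • ∇V p) - ∇U q̂)`; what remains is a linear identity.
-/

open MeasureTheory intervalIntegral Set

theorem ContDiff.gradient {F : Type*} [NormedAddCommGroup F] [InnerProductSpace ℝ F]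
    [CompleteSpace F] {f : F → ℝ} {m n : WithTop ℕ∞} (hf : ContDiff ℝ n f) (hmn : m + 1 ≤ n) :
    ContDiff ℝ m (gradient f) :=
  (InnerProductSpace.toDual ℝ F).symm.contDiff.comp (hf.fderiv_right hmn)

section Integrals

variable {E : Type*} [NormedAddCommGroup E] [NormedSpace ℝ E] {a b : ℝ}

theorem intervalIntegrable_primitive {k : ℝ → E} (hk : ContinuousOn k (uIcc a b)) :
    IntervalIntegrable (fun t => ∫ s in a..t, k s) volume a b :=
  (continuousOn_primitive_interval hk.integrableOn_uIcc).intervalIntegrable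

theorem integral_primitive_add {k₁ k₂ : ℝ → E} (h₁ : ContinuousOn k₁ (uIcc a b))
    (h₂ : ContinuousOn k₂ (uIcc a b)) :
    ∫ t in a..b, ∫ s in a..t, (k₁ s + k₂ s) =
      (∫ t in a..b, ∫ s in a..t, k₁ s) + ∫ t in a..b, ∫ s in a..t, k₂ s := by
  rw [← integral_add (intervalIntegrable_primitive h₁) (intervalIntegrable_primitive h₂)]
  refine integral_congr fun t ht => integral_add ?_ ?_
  · exact (h₁.mono (uIcc_subset_uIcc_left ht)).intervalIntegrable
  · exact (h₂.mono (uIcc_subset_uIcc_left ht)).intervalIntegrable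

end Integrals

section ChainRule

variable {E F : Type*} [NormedAddCommGroup E] [NormedSpace ℝ E]
  [NormedAddCommGroup F] [NormedSpace ℝ F] [CompleteSpace F] {g : E → F}

theorem ContDiff.sub_eq_integral_fderiv_comp (hg : ContDiff ℝ 1 g) {a b : ℝ} {γ γ' : ℝ → E}
    (hγ : ∀ s ∈ uIcc a b, HasDerivAt γ (γ' s) s) (hγ' : ContinuousOn γ' (uIcc a b)) :
    g (γ b) - g (γ a) = ∫ s in a..b, fderiv ℝ g (γ s) (γ' s) := by
  refine (integral_eq_sub_of_hasDerivAt (f := fun s => g (γ s)) (fun s hs => ?_) ?_).symm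
  · exact (hg.differentiable one_ne_zero (γ s)).hasFDerivAt.comp_hasDerivAt s (hγ s hs)
  · exact (((hg.continuous_fderiv one_ne_zero).comp_continuousOn
      (HasDerivAt.continuousOn hγ)).clm_apply hγ').intervalIntegrable

theorem ContDiff.sub_eq_integral_fderiv_line (hg : ContDiff ℝ 1 g) (x v : E) (t : ℝ) :
    g (x + t • v) - g x = ∫ s in 0..t, fderiv ℝ g (x + s • v) v := by
  simpa using hg.sub_eq_integral_fderiv_comp (γ := fun s => x + s • v) (a := 0) (b := t)
    (fun s _ => ((hasDerivAt_id s).smul_const v).const_add x) continuousOn_const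

theorem ContDiff.sub_eq_integral_fderiv_segment (hg : ContDiff ℝ 1 g) (x y : E) :
    g y - g x = ∫ s in 0..1, fderiv ℝ g ((1 - s) • x + s • y) (y - x) := by
  have h := hg.sub_eq_integral_fderiv_line x (y - x) 1
  rw [one_smul, add_sub_cancel] at h
  rw [h]
  congr 1 with s
  rw [show (1 - s) • x + s • y = x + s • (y - x) by module]

end ChainRule

theorem hamiltonian_momentum_eq_sub_integral_integral {E : Type*} [NormedAddCommGroup E] [NormedSpace ℝ E]
    [CompleteSpace E] {G W : E → E} (hG : ContDiff ℝ 1 G) (hW : Continuous W) {η : ℝ}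
    {Q P : ℝ → E} (hQ' : ∀ t ∈ uIcc 0 η, HasDerivAt Q (W (P t)) t)
    (hP' : ∀ t ∈ uIcc 0 η, HasDerivAt P (-G (Q t)) t) :
    P η = P 0 - η • G (Q 0) - ∫ t in 0..η, ∫ s in 0..t, fderiv ℝ G (Q s) (W (P s)) := by
  have hWP : ContinuousOn (fun s => W (P s)) (uIcc 0 η) :=
    hW.comp_continuousOn (HasDerivAt.continuousOn hP')
  have hGQ : ∀ t ∈ uIcc 0 η,
      G (Q t) = G (Q 0) + ∫ s in 0..t, fderiv ℝ G (Q s) (W (P s)) := by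
    intro t ht
    rw [← hG.sub_eq_integral_fderiv_comp (fun s hs => hQ' s (uIcc_subset_uIcc_left ht hs))
      (hWP.mono (uIcc_subset_uIcc_left ht)), add_sub_cancel]
  have hP : P η - P 0 = -∫ t in 0..η, G (Q t) := by
    rw [← intervalIntegral.integral_neg]
    exact (integral_eq_sub_of_hasDerivAt hP'
      (hG.continuous.comp_continuousOn (HasDerivAt.continuousOn hQ')).neg.intervalIntegrable).symm
  have hFQ : ContinuousOn (fun s => fderiv ℝ G (Q s) (W (P s))) (uIcc 0 η) :=
    ((hG.continuous_fderiv one_ne_zero).comp_continuousOn (HasDerivAt.continuousOn hQ')).clm_apply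
      hWP
  rw [integral_congr hGQ, integral_add intervalIntegrable_const (intervalIntegrable_primitive hFQ),
    intervalIntegral.integral_const, sub_zero] at hP
  rw [← sub_add_cancel (P η) (P 0), hP]
  abel

/-- Exact four-term decomposition of the momentum error of one leapfrog step versus the
exact Hamiltonian flow. -/
theorem stmt5 {d : ℕ} {η : ℝ} (hη : 0 < η)
    {U V : EuclideanSpace ℝ (Fin d) → ℝ}
    (hU : ContDiff ℝ 2 U) (hV : ContDiff ℝ 1 V)
    (q p : EuclideanSpace ℝ (Fin d))
    (Q P : ℝ → EuclideanSpace ℝ (Fin d))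
    (hQ' : ∀ t ∈ Set.Icc (0:ℝ) η, HasDerivAt Q (gradient V (P t)) t)
    (hP' : ∀ t ∈ Set.Icc (0:ℝ) η, HasDerivAt P (-(gradient U (Q t))) t)
    (hQ0 : Q 0 = q) (hP0 : P 0 = p) :
    (p - (η / 2) • (gradient U q
        + gradient U (q + η • gradient V (p - (η / 2) • gradient U q)))) - P η
      = (∫ t in (0:ℝ)..η, ∫ s in (0:ℝ)..t,
            (fderiv ℝ (gradient U) (Q s) - fderiv ℝ (gradient U) (q + s • gradient V p))
              (gradient V (P s)))
        + (∫ t in (0:ℝ)..η, ∫ s in (0:ℝ)..t,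
            (fderiv ℝ (gradient U) (q + s • gradient V p))
              (gradient V (P s) - gradient V p))
        + ((∫ t in (0:ℝ)..η, ∫ s in (0:ℝ)..t,
              (fderiv ℝ (gradient U) (q + s • gradient V p)) (gradient V p))
            - (η / 2) • ∫ s in (0:ℝ)..η,
                (fderiv ℝ (gradient U) (q + s • gradient V p)) (gradient V p))
        + (η ^ 2 / 2) • ∫ s in (0:ℝ)..1,
            (fderiv ℝ (gradient U)
                ((1 - s) • (q + η • gradient V (p - (η / 2) • gradient U q))
                  + s • (q + η • gradient V p)))
              (gradient V p - gradient V (p - (η / 2) • gradient U q)) := by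
  have hg : ContDiff ℝ 1 (gradient U) := hU.gradient (by norm_num)
  have hF : Continuous (fderiv ℝ (gradient U)) := hg.continuous_fderiv one_ne_zero
  have hgV : Continuous (gradient V) := (hV.gradient (m := 0) (by norm_num)).continuous
  rw [← uIcc_of_le hη.le] at hQ' hP'
  have hQc : ContinuousOn Q (uIcc 0 η) := HasDerivAt.continuousOn hQ'
  have hgVP : ContinuousOn (fun s => gradient V (P s)) (uIcc 0 η) :=
    hgV.comp_continuousOn (HasDerivAt.continuousOn hP')
  set v := gradient V p
  set w := gradient V (p - (η / 2) • gradient U q)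
  have hsegment : (η ^ 2 / 2) • ∫ s in (0:ℝ)..1,
        fderiv ℝ (gradient U) ((1 - s) • (q + η • w) + s • (q + η • v)) (v - w)
      = (η / 2) • (gradient U (q + η • v) - gradient U (q + η • w)) := by
    rw [hg.sub_eq_integral_fderiv_segment, show q + η • v - (q + η • w) = η • (v - w) by module]
    simp only [map_smul, intervalIntegral.integral_smul, smul_smul]
    congr 1
    ring
  have hsplit : ∫ t in (0:ℝ)..η, ∫ s in (0:ℝ)..t, fderiv ℝ (gradient U) (Q s) (gradient V (P s))
      = (∫ t in (0:ℝ)..η, ∫ s in (0:ℝ)..t,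
            (fderiv ℝ (gradient U) (Q s) - fderiv ℝ (gradient U) (q + s • v)) (gradient V (P s)))
        + (∫ t in (0:ℝ)..η, ∫ s in (0:ℝ)..t,
            fderiv ℝ (gradient U) (q + s • v) (gradient V (P s) - v))
        + ∫ t in (0:ℝ)..η, ∫ s in (0:ℝ)..t, fderiv ℝ (gradient U) (q + s • v) v := by
    rw [← integral_primitive_add, ← integral_primitive_add]
    · simp only [sub_apply, map_sub, sub_add_sub_cancel, sub_add_cancel]
    all_goals fun_prop
  rw [hamiltonian_momentum_eq_sub_integral_integral hg hgV hQ' hP', hQ0, hP0, hsegment, hsplit,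
    ← hg.sub_eq_integral_fderiv_line q v η]
  module
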